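/- Fix z ∈ ℝ and let U = {(u,v) ∈ ℝ² : u ≠ v}; write s = sinhc(2z/(u−v)) and ch = cosh(2z/(u−v)). Define smooth vector fields on U by X_{z,1} = (1, 1), X_{z,2} = ( (1/2)(u+v)·ch + (1/2)(u−v)·s , (1/2)(u+v)·ch − (1/2)(u−v)·s ), X_{z,3} = ( (1/4)[ (u+v)² + (u−v)²/s² ]·ch + (1/2)(u²−v²)·s , (1/4)[ (u+v)² + (u−v)²/s² ]·ch − (1/2)(u²−v²)·s ). Then their Lie brackets satisfy [X_{z,1}, X_{z,2}] = ch·X_{z,1}, [X_{z,1}, X_{z,3}] = 2·X_{z,2}, and [X_{z,2}, X_{z,3}] = ch·X_{z,3} − z²·( 1 − ((u+v)/(u−v))²·s² )·X_{z,1}. -/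

import Mathlib

/-- The cardinal hyperbolic sine: `sinhc t = sinh t / t` for `t ≠ 0`, `sinhc 0 = 1`. -/
noncomputable def sinhc (t : ℝ) : ℝ := if t = 0 then 1 else Real.sinh t / t

/-- Lie bracket of vector fields on (an open subset of) ℝ²:
`[V,W](p) = DW(p)·V(p) − DV(p)·W(p)`. -/
noncomputable def lie2 (V W : ℝ × ℝ → ℝ × ℝ) (p : ℝ × ℝ) : ℝ × ℝ :=
  fderiv ℝ W p (V p) - fderiv ℝ V p (W p)

/-- Deformed coupled-Riccati vector field `X_{z,1} = ∂/∂u + ∂/∂v`. -/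
noncomputable def X2R1 : ℝ × ℝ → ℝ × ℝ := fun _ => (1, 1)

/-- Deformed coupled-Riccati vector field `X_{z,2}`, with
`s = sinhc(2z/(u−v))`, `ch = cosh(2z/(u−v))`. -/
noncomputable def X2R2 (z : ℝ) : ℝ × ℝ → ℝ × ℝ := fun q =>
  ((1 / 2) * (q.1 + q.2) * Real.cosh (2 * z / (q.1 - q.2))
      + (1 / 2) * (q.1 - q.2) * sinhc (2 * z / (q.1 - q.2)),
    (1 / 2) * (q.1 + q.2) * Real.cosh (2 * z / (q.1 - q.2))
      - (1 / 2) * (q.1 - q.2) * sinhc (2 * z / (q.1 - q.2)))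

/-- Deformed coupled-Riccati vector field `X_{z,3}`. -/
noncomputable def X2R3 (z : ℝ) : ℝ × ℝ → ℝ × ℝ := fun q =>
  ((1 / 4) * ((q.1 + q.2) ^ 2 + (q.1 - q.2) ^ 2 / (sinhc (2 * z / (q.1 - q.2))) ^ 2)
        * Real.cosh (2 * z / (q.1 - q.2))
      + (1 / 2) * (q.1 ^ 2 - q.2 ^ 2) * sinhc (2 * z / (q.1 - q.2)),
    (1 / 4) * ((q.1 + q.2) ^ 2 + (q.1 - q.2) ^ 2 / (sinhc (2 * z / (q.1 - q.2))) ^ 2)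
        * Real.cosh (2 * z / (q.1 - q.2))
      - (1 / 2) * (q.1 ^ 2 - q.2 ^ 2) * sinhc (2 * z / (q.1 - q.2)))

set_option maxHeartbeats 2000000 in
/-- Auxiliary: the linear map `(x, y) ↦ a x + b y` on `ℝ²`. -/
noncomputable def pdCLM (a b : ℝ) : ℝ × ℝ →L[ℝ] ℝ :=
  a • ContinuousLinearMap.fst ℝ ℝ ℝ + b • ContinuousLinearMap.snd ℝ ℝ ℝ

lemma pdCLM_apply (a b : ℝ) (q : ℝ × ℝ) : pdCLM a b q = a * q.1 + b * q.2 := by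
  simp [pdCLM]

set_option maxHeartbeats 2000000 in
/-- Lie brackets of deformed coupled-Riccati vector fields on `{u ≠ v}`. -/
theorem deformed_coupledRiccati_vectorFields (z : ℝ) :
    ∀ p : ℝ × ℝ, p.1 ≠ p.2 →
      lie2 X2R1 (X2R2 z) p = Real.cosh (2 * z / (p.1 - p.2)) • X2R1 p ∧
      lie2 X2R1 (X2R3 z) p = (2 : ℝ) • X2R2 z p ∧
      lie2 (X2R2 z) (X2R3 z) p
        = Real.cosh (2 * z / (p.1 - p.2)) • X2R3 z p
          - (z ^ 2 * (1 - ((p.1 + p.2) / (p.1 - p.2)) ^ 2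
              * (sinhc (2 * z / (p.1 - p.2))) ^ 2)) • X2R1 p := by
  intro p hp
  have hd : p.1 - p.2 ≠ 0 := sub_ne_zero.mpr hp
  have hf1 : fderiv ℝ X2R1 p = 0 := by
    rw [show X2R1 = fun _ : ℝ × ℝ => ((1 : ℝ), (1 : ℝ)) from rfl]
    exact fderiv_const_apply _
  by_cases hz : z = 0
  · -- undeformed case
    subst hz
    have e2 : X2R2 0 = fun q : ℝ × ℝ => (q.1, q.2) := by
      funext q
      simp [X2R2, sinhc, Prod.ext_iff]
      constructor <;> ring
    have e3 : X2R3 0 = fun q : ℝ × ℝ => (q.1 ^ 2, q.2 ^ 2) := by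
      funext q
      simp [X2R3, sinhc, Prod.ext_iff]
      constructor <;> ring
    have hf2 : fderiv ℝ (X2R2 0) p
        = (ContinuousLinearMap.fst ℝ ℝ ℝ).prod (ContinuousLinearMap.snd ℝ ℝ ℝ) := by
      rw [e2]; exact (hasFDerivAt_fst.prodMk hasFDerivAt_snd).fderiv
    have hf3 : fderiv ℝ (X2R3 0) p = (((2 : ℕ) * p.1 ^ 1) • ContinuousLinearMap.fst ℝ ℝ ℝ).prod
        (((2 : ℕ) * p.2 ^ 1) • ContinuousLinearMap.snd ℝ ℝ ℝ) := by
      rw [e3]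
      exact (((hasDerivAt_pow 2 p.1).comp_hasFDerivAt p hasFDerivAt_fst).prodMk
        ((hasDerivAt_pow 2 p.2).comp_hasFDerivAt p hasFDerivAt_snd)).fderiv
    have hv1 : X2R1 p = (1, 1) := rfl
    refine ⟨?_, ?_, ?_⟩
    · rw [lie2, hf1, hf2, hv1]
      simp [Prod.ext_iff]
    · rw [lie2, hf1, hf3, hv1, e2]
      simp [Prod.ext_iff, smul_eq_mul]
      try constructor <;> ring
    · rw [lie2, hf2, hf3, hv1, e2, e3]
      simp [Prod.ext_iff, smul_eq_mul, sinhc]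
      try constructor <;> ring
  · -- deformed case, z ≠ 0
    have hw0 : 2 * z / (p.1 - p.2) ≠ 0 := div_ne_zero (mul_ne_zero two_ne_zero hz) hd
    have hS : Real.sinh (2 * z / (p.1 - p.2)) ≠ 0 := by
      simpa [Real.sinh_eq_zero] using hw0
    have hsinhc : sinhc (2 * z / (p.1 - p.2))
        = Real.sinh (2 * z / (p.1 - p.2)) / (2 * z / (p.1 - p.2)) := by
      rw [sinhc, if_neg hw0]
    set S := Real.sinh (2 * z / (p.1 - p.2)) with hSdef
    set C := Real.cosh (2 * z / (p.1 - p.2)) with hCdef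
    -- building blocks for derivatives
    have h1 : HasFDerivAt (fun q : ℝ × ℝ => q.1) (ContinuousLinearMap.fst ℝ ℝ ℝ) p :=
     hasFDerivAt_fst
    have h2 : HasFDerivAt (fun q : ℝ × ℝ => q.2) (ContinuousLinearMap.snd ℝ ℝ ℝ) p :=
      hasFDerivAt_snd
    have hdiff := h1.sub h2
    have hsum := h1.add h2
    have hw := ((hasDerivAt_inv hd).comp_hasFDerivAt p hdiff).const_mul (2 * z)
    have hcosh := (Real.hasDerivAt_cosh (2 * z / (p.1 - p.2))).comp_hasFDerivAt p hw
    have hsinh := (Real.hasDerivAt_sinh (2 * z / (p.1 - p.2))).comp_hasFDerivAt p hw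
    have hwinv := (hasDerivAt_inv hw0).comp_hasFDerivAt p hw
    have hs := hsinh.mul hwinv
    -- clean partial derivatives
    have hY2 : HasFDerivAt (fun q : ℝ × ℝ =>
        ((1 / 2) * (q.1 + q.2) * Real.cosh (2 * z / (q.1 - q.2))
            + (1 / 2) * (q.1 - q.2) * (Real.sinh (2 * z / (q.1 - q.2)) / (2 * z / (q.1 - q.2))),
          (1 / 2) * (q.1 + q.2) * Real.cosh (2 * z / (q.1 - q.2))
            - (1 / 2) * (q.1 - q.2) * (Real.sinh (2 * z / (q.1 - q.2)) / (2 * z / (q.1 - q.2)))))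
        ((pdCLM ((p.1 - p.2) * S / (2 * z) - z * (p.1 + p.2) * S / (p.1 - p.2) ^ 2)
            (C + z * (p.1 + p.2) * S / (p.1 - p.2) ^ 2 - (p.1 - p.2) * S / (2 * z))).prod
         (pdCLM (C - z * (p.1 + p.2) * S / (p.1 - p.2) ^ 2 - (p.1 - p.2) * S / (2 * z))
            (z * (p.1 + p.2) * S / (p.1 - p.2) ^ 2 + (p.1 - p.2) * S / (2 * z)))) p := by
      have hA := ((hsum.const_mul (1/2 : ℝ)).mul hcosh).add ((hdiff.const_mul (1/2 : ℝ)).mul hs)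
      have hB := ((hsum.const_mul (1/2 : ℝ)).mul hcosh).sub ((hdiff.const_mul (1/2 : ℝ)).mul hs)
      refine (hA.prodMk hB).congr_fderiv ?_
      refine ContinuousLinearMap.ext fun x => ?_
      simp only [ContinuousLinearMap.prod_apply, ContinuousLinearMap.add_apply,
        ContinuousLinearMap.sub_apply, ContinuousLinearMap.smul_apply,
        ContinuousLinearMap.coe_fst', ContinuousLinearMap.coe_snd',
        ContinuousLinearMap.coe_sub', ContinuousLinearMap.coe_add', Pi.sub_apply, Pi.add_apply,
        smul_eq_mul, Function.comp_apply, Prod.mk.injEq, pdCLM_apply, Prod.smul_mk, Pi.mul_apply]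
      rw [show (2 : ℝ) * z * (p.1 - p.2)⁻¹ = 2 * z / (p.1 - p.2) from rfl]
      rw [← hSdef, ← hCdef]
      constructor <;> (field_simp; ring)
    have hY3 : HasFDerivAt (fun q : ℝ × ℝ =>
        ((1 / 4) * ((q.1 + q.2) ^ 2 + (q.1 - q.2) ^ 2
              / (Real.sinh (2 * z / (q.1 - q.2)) / (2 * z / (q.1 - q.2))) ^ 2)
            * Real.cosh (2 * z / (q.1 - q.2))
          + (1 / 2) * (q.1 ^ 2 - q.2 ^ 2)
              * (Real.sinh (2 * z / (q.1 - q.2)) / (2 * z / (q.1 - q.2))),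
          (1 / 4) * ((q.1 + q.2) ^ 2 + (q.1 - q.2) ^ 2
              / (Real.sinh (2 * z / (q.1 - q.2)) / (2 * z / (q.1 - q.2))) ^ 2)
            * Real.cosh (2 * z / (q.1 - q.2))
          - (1 / 2) * (q.1 ^ 2 - q.2 ^ 2)
              * (Real.sinh (2 * z / (q.1 - q.2)) / (2 * z / (q.1 - q.2)))))
        ((pdCLM (-(z * (p.1 + p.2) ^ 2 * S) / (2 * (p.1 - p.2) ^ 2)
              + 2 * z ^ 3 * (2 * C ^ 2 - S ^ 2) / ((p.1 - p.2) ^ 2 * S ^ 3)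
              + (p.1 - p.2) ^ 2 * S / (4 * z) + (p.1 + p.2) * (p.1 - p.2) * S / (2 * z))
            ((p.1 + p.2) * C + z * (p.1 + p.2) ^ 2 * S / (2 * (p.1 - p.2) ^ 2)
              - 2 * z ^ 3 * (2 * C ^ 2 - S ^ 2) / ((p.1 - p.2) ^ 2 * S ^ 3)
              + (p.1 - p.2) ^ 2 * S / (4 * z) - (p.1 + p.2) * (p.1 - p.2) * S / (2 * z))).prod
         (pdCLM ((p.1 + p.2) * C - z * (p.1 + p.2) ^ 2 * S / (2 * (p.1 - p.2) ^ 2)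
              + 2 * z ^ 3 * (2 * C ^ 2 - S ^ 2) / ((p.1 - p.2) ^ 2 * S ^ 3)
              - (p.1 - p.2) ^ 2 * S / (4 * z) - (p.1 + p.2) * (p.1 - p.2) * S / (2 * z))
            (z * (p.1 + p.2) ^ 2 * S / (2 * (p.1 - p.2) ^ 2)
              - 2 * z ^ 3 * (2 * C ^ 2 - S ^ 2) / ((p.1 - p.2) ^ 2 * S ^ 3)
              - (p.1 - p.2) ^ 2 * S / (4 * z) + (p.1 + p.2) * (p.1 - p.2) * S / (2 * z)))) p := by
      have hsum2 := (hasDerivAt_pow 2 (p.1 + p.2)).comp_hasFDerivAt p hsum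
      have hdiff2 := (hasDerivAt_pow 2 (p.1 - p.2)).comp_hasFDerivAt p hdiff
      have hs2 := (hasDerivAt_pow 2
        (Real.sinh (2 * z / (p.1 - p.2)) / (2 * z / (p.1 - p.2)))).comp_hasFDerivAt p hs
      have hs2inv := (hasDerivAt_inv
        (pow_ne_zero 2 (div_ne_zero hS hw0))).comp_hasFDerivAt p hs2
      have hterm := hdiff2.mul hs2inv
      have hfst2 := (hasDerivAt_pow 2 p.1).comp_hasFDerivAt p h1
      have hsnd2 := (hasDerivAt_pow 2 p.2).comp_hasFDerivAt p h2
      have hQ1 := ((hsum2.add hterm).const_mul (1/4 : ℝ)).mul hcosh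
      have hQ2 := ((hfst2.sub hsnd2).const_mul (1/2 : ℝ)).mul hs
      refine ((hQ1.add hQ2).prodMk (hQ1.sub hQ2)).congr_fderiv ?_
      refine ContinuousLinearMap.ext fun x => ?_
      simp only [ContinuousLinearMap.prod_apply, ContinuousLinearMap.add_apply,
        ContinuousLinearMap.sub_apply, ContinuousLinearMap.smul_apply,
        ContinuousLinearMap.coe_fst', ContinuousLinearMap.coe_snd',
        ContinuousLinearMap.coe_sub', ContinuousLinearMap.coe_add', Pi.sub_apply, Pi.add_apply,
        smul_eq_mul, Function.comp_apply, Prod.mk.injEq, pdCLM_apply, Prod.smul_mk, Pi.mul_apply,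
        pow_one, Nat.cast_ofNat]
      rw [show (2 : ℝ) * z * (p.1 - p.2)⁻¹ = 2 * z / (p.1 - p.2) from rfl]
      rw [← hSdef, ← hCdef]
      constructor <;> (field_simp; ring_nf; field_simp; ring)
    -- eventual equality with the sinhc-forms
    have hne : ∀ᶠ q : ℝ × ℝ in nhds p, q.1 - q.2 ≠ 0 :=
      ((continuous_fst.sub continuous_snd).continuousAt).eventually_ne hd
    have hev2 : X2R2 z =ᶠ[nhds p] (fun q : ℝ × ℝ =>
        ((1 / 2) * (q.1 + q.2) * Real.cosh (2 * z / (q.1 - q.2))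
            + (1 / 2) * (q.1 - q.2) * (Real.sinh (2 * z / (q.1 - q.2)) / (2 * z / (q.1 - q.2))),
          (1 / 2) * (q.1 + q.2) * Real.cosh (2 * z / (q.1 - q.2))
            - (1 / 2) * (q.1 - q.2) * (Real.sinh (2 * z / (q.1 - q.2)) / (2 * z / (q.1 - q.2))))) := by
      refine hne.mono fun q hq => ?_
      have ht : 2 * z / (q.1 - q.2) ≠ 0 := div_ne_zero (mul_ne_zero two_ne_zero hz) hq
      simp only [X2R2, sinhc, if_neg ht]
    have hev3 : X2R3 z =ᶠ[nhds p] (fun q : ℝ × ℝ =>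
        ((1 / 4) * ((q.1 + q.2) ^ 2 + (q.1 - q.2) ^ 2
              / (Real.sinh (2 * z / (q.1 - q.2)) / (2 * z / (q.1 - q.2))) ^ 2)
            * Real.cosh (2 * z / (q.1 - q.2))
          + (1 / 2) * (q.1 ^ 2 - q.2 ^ 2)
              * (Real.sinh (2 * z / (q.1 - q.2)) / (2 * z / (q.1 - q.2))),
          (1 / 4) * ((q.1 + q.2) ^ 2 + (q.1 - q.2) ^ 2
              / (Real.sinh (2 * z / (q.1 - q.2)) / (2 * z / (q.1 - q.2))) ^ 2)
            * Real.cosh (2 * z / (q.1 - q.2))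
          - (1 / 2) * (q.1 ^ 2 - q.2 ^ 2)
              * (Real.sinh (2 * z / (q.1 - q.2)) / (2 * z / (q.1 - q.2))))) := by
      refine hne.mono fun q hq => ?_
      have ht : 2 * z / (q.1 - q.2) ≠ 0 := div_ne_zero (mul_ne_zero two_ne_zero hz) hq
      simp only [X2R3, sinhc, if_neg ht]
    have hf2 := hev2.fderiv_eq.trans hY2.fderiv
    have hf3 := hev3.fderiv_eq.trans hY3.fderiv
    have hv1 : X2R1 p = (1, 1) := rfl
    have hv2 : X2R2 z p =
        ((1 / 2) * (p.1 + p.2) * C + (1 / 2) * (p.1 - p.2) * (S / (2 * z / (p.1 - p.2))),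
          (1 / 2) * (p.1 + p.2) * C - (1 / 2) * (p.1 - p.2) * (S / (2 * z / (p.1 - p.2)))) := by
      simp only [X2R2, hsinhc]; rfl
    have hv3 : X2R3 z p =
        ((1 / 4) * ((p.1 + p.2) ^ 2 + (p.1 - p.2) ^ 2 / (S / (2 * z / (p.1 - p.2))) ^ 2) * C
          + (1 / 2) * (p.1 ^ 2 - p.2 ^ 2) * (S / (2 * z / (p.1 - p.2))),
          (1 / 4) * ((p.1 + p.2) ^ 2 + (p.1 - p.2) ^ 2 / (S / (2 * z / (p.1 - p.2))) ^ 2) * C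
          - (1 / 2) * (p.1 ^ 2 - p.2 ^ 2) * (S / (2 * z / (p.1 - p.2)))) := by
      simp only [X2R3, hsinhc]; rfl
    refine ⟨?_, ?_, ?_⟩
    · rw [lie2, hf1, hf2, hv1]
      simp only [ContinuousLinearMap.zero_apply, sub_zero, ContinuousLinearMap.prod_apply,
        pdCLM_apply, Prod.smul_mk, smul_eq_mul, Prod.mk.injEq]
      constructor <;> (field_simp; ring)
    · rw [lie2, hf1, hf3, hv1, hv2]
      simp only [ContinuousLinearMap.zero_apply, sub_zero, ContinuousLinearMap.prod_apply,
        pdCLM_apply, Prod.smul_mk, smul_eq_mul, Prod.mk.injEq]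
      constructor <;> (field_simp; ring)
    · rw [lie2, hf2, hf3, hv1, hv2, hv3, hsinhc]
      simp only [ContinuousLinearMap.prod_apply, pdCLM_apply, Prod.smul_mk, smul_eq_mul,
        Prod.mk_sub_mk, Prod.mk.injEq]
      constructor <;> (field_simp; ring)
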